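/- For all integers n ≥ 2 and k ≥ 2, let A be the adjacency matrix of W_{n,k} over ℝ. Then the characteristic polynomial of A² equals (X − 1)^{2(k−1)n} · ∏_{j=0}^{n−1} ( X − (k² + 1 + 2k·cos(2πj/n)) )². Equivalently, the eigenvalues of A² are k² + 1 + 2k·cos(2πj/n) for j = 0, …, n−1, each with multiplicity 2, together with 1 with multiplicity 2(k−1)n. -/

import Mathlib

open Polynomial

/-- Vertex set of `W n k`: `Sum.inl (i, j)` is the vertex `v_{i,j}` and
`Sum.inr (i, j)` is the vertex `w_{i,j}`, for `i ∈ ℤ/nℤ` and `j ∈ {1, …, k}`. -/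
abbrev WVert (n k : ℕ) : Type := (ZMod n × Fin k) ⊕ (ZMod n × Fin k)

/-- Adjacency of `W n k`: `v_{i,j} ~ w_{i',l}` iff `i' = i`, or `i = i' + 1` and `j = l`. -/
def WAdj (n k : ℕ) : WVert n k → WVert n k → Prop
  | Sum.inl p, Sum.inr q => q.1 = p.1 ∨ (p.1 = q.1 + 1 ∧ p.2 = q.2)
  | Sum.inr q, Sum.inl p => q.1 = p.1 ∨ (p.1 = q.1 + 1 ∧ p.2 = q.2)
  | Sum.inl _, Sum.inl _ => False
  | Sum.inr _, Sum.inr _ => False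

/-- The graph `W_{n,k}`: vertices `v_{i,j}` and `w_{i,j}` (`i ∈ ℤ/nℤ`, `1 ≤ j ≤ k`),
with edges `v_{i,j} w_{i,l}` for all `i, j, l`, and `w_{i,j} v_{i+1,j}` for all `i, j`. -/
def W (n k : ℕ) : SimpleGraph (WVert n k) where
  Adj := WAdj n k
  symm := by
    refine ⟨?_⟩
    rintro (p | p) (q | q) h
    · exact h.elim
    · exact h
    · exact h
    · exact h.elim
  loopless := by refine ⟨?_⟩; rintro (p | p) h <;> exact h

instance (n k : ℕ) : DecidableRel (WAdj n k) := fun a b =>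
  match a, b with
  | Sum.inl p, Sum.inr q =>
      inferInstanceAs (Decidable (q.1 = p.1 ∨ (p.1 = q.1 + 1 ∧ p.2 = q.2)))
  | Sum.inr q, Sum.inl p =>
      inferInstanceAs (Decidable (q.1 = p.1 ∨ (p.1 = q.1 + 1 ∧ p.2 = q.2)))
  | Sum.inl _, Sum.inl _ => inferInstanceAs (Decidable False)
  | Sum.inr _, Sum.inr _ => inferInstanceAs (Decidable False)

instance (n k : ℕ) : DecidableRel (W n k).Adj :=
  inferInstanceAs (DecidableRel (WAdj n k))


/-!
`W_{n,k}` is bipartite between the `v`- and the `w`-vertices, so `A = [[0, B], [Bᵀ, 0]]` and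
`A² = diag(B Bᵀ, Bᵀ B)`; since `B Bᵀ` and `Bᵀ B` have the same characteristic polynomial,
`χ(A²) = χ(B Bᵀ)²`. With `T` the cyclic shift of `ℤ/nℤ` and `J` the all-ones `k × k` matrix,
`B = I ⊗ J + T ⊗ I`, and `T Tᵀ = I`, `J² = k J` give `B Bᵀ = (k I + T + Tᵀ) ⊗ J + I`.
Writing `C ⊗ J = U V` with `V U = k C` (`U` of size `nk × n`), Sylvester's identity gives
`χ(C ⊗ J) = X^{n(k-1)} χ(k C)`; finally the circulant `k (k I + T + Tᵀ)` is diagonalised by the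
discrete Fourier transform on `ℤ/nℤ`, with eigenvalues `k (k + 2 cos(2πj/n))`.
-/

open Matrix Finset
open scoped Kronecker

namespace Matrix

variable {ι κ R : Type*} [CommRing R] [Fintype ι] [DecidableEq ι] [Fintype κ] [DecidableEq κ]

theorem charpoly_sq_fromBlocks_zero (B C : Matrix ι ι R) :
    ((fromBlocks 0 B C 0) ^ 2).charpoly = (B * C).charpoly ^ 2 := by
  rw [sq, fromBlocks_multiply]
  simp [charpoly_mul_comm C B, sq]

theorem charpoly_eq_of_mul_eq_mul {M D P Q : Matrix ι ι R} (hPQ : P * Q = 1)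
    (h : M * P = P * D) : M.charpoly = D.charpoly := by
  have hD : D = Q * (M * P) := by rw [h, ← mul_assoc, mul_eq_one_comm.mp hPQ, one_mul]
  rw [hD, charpoly_mul_comm, mul_assoc, hPQ, mul_one]

theorem charpoly_add_one (M : Matrix ι ι R) : (M + 1).charpoly = M.charpoly.comp (X - 1) := by
  simpa [sub_eq_add_neg] using charpoly_sub_scalar M (-1)

theorem charpoly_kronecker_vecMulVec [Nonempty κ] (C : Matrix ι ι R) (u v : κ → R) :
    (C ⊗ₖ vecMulVec u v).charpoly =
      X ^ (Fintype.card ι * (Fintype.card κ - 1)) * ((v ⬝ᵥ u) • C).charpoly := by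
  let U : Matrix (ι × κ) ι R := of fun p i => C p.1 i * u p.2
  let V : Matrix ι (ι × κ) R := of fun i q => if i = q.1 then v q.2 else 0
  have hUV : U * V = C ⊗ₖ vecMulVec u v := by
    ext ⟨i, j⟩ ⟨i', j'⟩
    simp [U, V, mul_apply, vecMulVec_apply, mul_comm, mul_left_comm]
  have hVU : V * U = (v ⬝ᵥ u) • C := by
    ext i i'
    simp [U, V, mul_apply, Fintype.sum_prod_type, dotProduct, Finset.mul_sum, mul_comm,
      mul_left_comm]
  have hcard : Fintype.card ι ≤ Fintype.card (ι × κ) := by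
    rw [Fintype.card_prod]
    exact Nat.le_mul_of_pos_right _ Fintype.card_pos
  rw [← hUV, charpoly_mul_comm_of_le U V hcard, hVU, Fintype.card_prod, Nat.mul_sub_one]

end Matrix

namespace ZMod

variable {N : ℕ}

variable (N) in
noncomputable def shiftMatrix (R : Type*) [Zero R] [One R] : Matrix (ZMod N) (ZMod N) R :=
  circulant (Pi.single 1 1)

theorem transpose_shiftMatrix {R : Type*} [Zero R] [One R] :
    (shiftMatrix N R)ᵀ = circulant (Pi.single (-1) 1) := by
  rw [shiftMatrix, transpose_circulant]
  congr 1
  ext i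
  simp [Pi.single_apply, neg_eq_iff_eq_neg]

variable [NeZero N]

theorem shiftMatrix_mul_transpose {R : Type*} [CommRing R] :
    shiftMatrix N R * (shiftMatrix N R)ᵀ = 1 := by
  ext i j
  have h : ∀ a x : ZMod N, a - x = 1 ↔ x = a - 1 := fun a x => by
    rw [sub_eq_iff_eq_add, eq_sub_iff_add_eq, add_comm, eq_comm]
  simp [shiftMatrix, mul_apply, circulant_apply, Pi.single_apply, one_apply, h, eq_comm]

theorem prod_range_natCast {M : Type*} [CommMonoid M] (f : ZMod N → M) :
    ∏ j ∈ range N, f j = ∏ a, f a :=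
  prod_nbij' (↑) val (fun _ _ => mem_univ _) (fun a _ => mem_range.2 a.val_lt)
    (fun _ hj => val_cast_of_lt (mem_range.1 hj)) (fun a _ => natCast_zmod_val a) (fun _ _ => rfl)

theorem stdAddChar_natCast_add_neg (j : ℕ) :
    stdAddChar (j : ZMod N) + stdAddChar (-(j : ZMod N)) =
      2 * Real.cos (2 * Real.pi * j / N) := by
  have h₁ := stdAddChar_coe (N := N) j
  have h₂ := stdAddChar_coe (N := N) (-j)
  push_cast at h₁ h₂
  rw [h₁, h₂, Complex.ofReal_cos, Complex.two_cos]
  push_cast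
  ring_nf

theorem dft_single (b : ZMod N) (x : ℂ) (a : ZMod N) :
    𝓕 (Pi.single b x) a = stdAddChar (-(b * a)) * x := by
  simp [dft_apply, Pi.single_apply]

variable (N) in
noncomputable def dftMatrix : Matrix (ZMod N) (ZMod N) ℂ := of fun i a => stdAddChar (i * a)

theorem dftMatrix_mul_inv :
    dftMatrix N * (of fun a j => (N : ℂ)⁻¹ * stdAddChar (-(a * j))) = 1 := by
  ext i j
  have horth : ∑ a : ZMod N, stdAddChar (a * (i - j)) = if i = j then (N : ℂ) else 0 := by
    rw [AddChar.sum_mulShift _ (isPrimitive_stdAddChar N), ZMod.card]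
    by_cases h : i = j <;> simp [h, sub_eq_zero]
  have hexp : ∀ a : ZMod N, i * a + -(a * j) = a * (i - j) := fun a => by ring
  simp only [dftMatrix, mul_apply, of_apply, one_apply]
  simp_rw [mul_left_comm _ (N : ℂ)⁻¹, ← AddChar.map_add_eq_mul, ← Finset.mul_sum, hexp, horth]
  split_ifs <;> simp

theorem circulant_mul_dftMatrix (v : ZMod N → ℂ) :
    circulant v * dftMatrix N = dftMatrix N * diagonal (𝓕 v) := by
  ext i a
  rw [mul_diagonal, mul_apply, dft_apply, Finset.mul_sum]
  refine Fintype.sum_equiv (Equiv.subLeft i) _ _ fun j => ?_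
  simp only [circulant_apply, dftMatrix, of_apply, Equiv.subLeft_apply, smul_eq_mul]
  rw [← mul_assoc, ← AddChar.map_add_eq_mul, mul_comm]
  ring_nf

theorem charpoly_circulant (v : ZMod N → ℂ) :
    (circulant v).charpoly = ∏ a, (X - C (𝓕 v a)) := by
  rw [charpoly_eq_of_mul_eq_mul dftMatrix_mul_inv (circulant_mul_dftMatrix v), charpoly_diagonal]

theorem charpoly_smul_smul_one_add_shiftMatrix_add_transpose (a c : ℂ) :
    (a • (c • 1 + shiftMatrix N ℂ + (shiftMatrix N ℂ)ᵀ)).charpoly =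
      ∏ j ∈ range N, (X - C (a * (c + 2 * Real.cos (2 * Real.pi * j / N)))) := by
  rw [transpose_shiftMatrix, shiftMatrix, ← circulant_single_one, ← circulant_smul,
    ← circulant_add, ← circulant_add, ← circulant_smul, charpoly_circulant, ← prod_range_natCast]
  refine prod_congr rfl fun j _ => ?_
  simp only [_root_.map_add, _root_.map_smul, Pi.add_apply, Pi.smul_apply, dft_single,
    ← stdAddChar_natCast_add_neg, zero_mul, neg_zero, one_mul, neg_mul, neg_neg,
    AddChar.map_zero_eq_one, mul_one, smul_eq_mul]
  ring_nf

end ZMod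

theorem SimpleGraph.map_adjMatrix {V R S : Type*} (G : SimpleGraph V) [DecidableRel G.Adj]
    [NonAssocSemiring R] [NonAssocSemiring S] (f : R →+* S) :
    (G.adjMatrix R).map f = G.adjMatrix S := by
  ext v w
  simp [SimpleGraph.adjMatrix_apply, apply_ite f]

namespace W

variable {n k : ℕ}

-- `1 ⊗ₖ J` gives the edges `v_{i,j} w_{i,l}`, `shiftMatrix ⊗ₖ 1` the edges `v_{i+1,j} w_{i,j}`.
variable (n k) in
noncomputable def biadj (R : Type*) [CommRing R] : Matrix (ZMod n × Fin k) (ZMod n × Fin k) R :=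
  1 ⊗ₖ vecMulVec 1 1 + ZMod.shiftMatrix n R ⊗ₖ 1

theorem biadj_apply {R : Type*} [CommRing R] (hn : 2 ≤ n) (i i' : ZMod n) (j l : Fin k) :
    biadj n k R (i, j) (i', l) = if i' = i ∨ (i = i' + 1 ∧ j = l) then 1 else 0 := by
  have : Fact (1 < n) := ⟨hn⟩
  simp only [biadj, Matrix.add_apply, kroneckerMap_apply, one_apply, vecMulVec_apply, Pi.one_apply,
    ZMod.shiftMatrix, circulant_apply, Pi.single_apply, sub_eq_iff_eq_add]
  by_cases h₁ : i = i' <;> by_cases h₂ : i = i' + 1 <;> by_cases h₃ : j = l <;>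
    simp_all [add_comm, eq_comm]

theorem adjMatrix_eq_fromBlocks {R : Type*} [CommRing R] (hn : 2 ≤ n) :
    (W n k).adjMatrix R = fromBlocks 0 (biadj n k R) (biadj n k R)ᵀ 0 := by
  ext (⟨i, j⟩ | ⟨i, j⟩) (⟨i', l⟩ | ⟨i', l⟩) <;>
    simp [SimpleGraph.adjMatrix_apply, show (W n k).Adj = WAdj n k from rfl, WAdj, biadj_apply hn]

variable [NeZero n]

theorem biadj_mul_transpose {R : Type*} [CommRing R] :
    biadj n k R * (biadj n k R)ᵀ =
      ((k : R) • 1 + ZMod.shiftMatrix n R + (ZMod.shiftMatrix n R)ᵀ) ⊗ₖ vecMulVec 1 1 + 1 := by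
  simp only [biadj, transpose_add, ← kroneckerMap_transpose, transpose_one, transpose_vecMulVec,
    add_mul, mul_add, ← mul_kronecker_mul, mul_one, one_mul, ZMod.shiftMatrix_mul_transpose,
    vecMulVec_mul_vecMulVec, one_kronecker_one, add_kronecker]
  simp only [one_dotProduct_one, Fintype.card_fin, vecMulVec_smul, smul_kronecker, kronecker_smul]
  abel

theorem charpoly_biadj_mul_transpose (hk : 1 ≤ k) :
    (biadj n k ℂ * (biadj n k ℂ)ᵀ).charpoly =
      (X - 1) ^ ((k - 1) * n) * ∏ j ∈ range n,
        (X - C (((k : ℝ) ^ 2 + 1 + 2 * k * Real.cos (2 * Real.pi * j / n) : ℝ) : ℂ)) := by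
  have : Nonempty (Fin k) := ⟨⟨0, hk⟩⟩
  rw [biadj_mul_transpose, charpoly_add_one, charpoly_kronecker_vecMulVec, one_dotProduct_one,
    Fintype.card_fin, ZMod.charpoly_smul_smul_one_add_shiftMatrix_add_transpose]
  simp only [mul_comp, pow_comp, X_comp, Polynomial.prod_comp, sub_comp, C_comp, ZMod.card]
  rw [mul_comm n]
  congr 1
  refine prod_congr rfl fun j _ => ?_
  rw [sub_sub, ← C_1, ← C_add]
  push_cast
  ring_nf

end W

/-- If `A` is the adjacency matrix of `W_{n,k}`, then the characteristic polynomial of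
`A²` equals `(X − 1)^{2(k−1)n} · ∏_{j=0}^{n−1} (X − (k² + 1 + 2k cos(2πj/n)))²`; i.e.
the eigenvalues of `A²` are `k² + 1 + 2k cos(2πj/n)` for `j = 0,…,n−1`, each with
multiplicity `2`, together with `1` with multiplicity `2(k−1)n`. -/
theorem W_adjMatrix_sq_charpoly (n k : ℕ) [NeZero n] (hn : 2 ≤ n) (hk : 2 ≤ k) :
    (((W n k).adjMatrix ℝ) ^ 2).charpoly =
      (X - 1) ^ (2 * ((k - 1) * n)) *
        ∏ j ∈ Finset.range n,
          (X - C ((k : ℝ) ^ 2 + 1 + 2 * k * Real.cos (2 * Real.pi * j / n))) ^ 2 := by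
  apply map_injective Complex.ofRealHom Complex.ofReal_injective
  rw [← charpoly_map, Matrix.map_pow, SimpleGraph.map_adjMatrix, W.adjMatrix_eq_fromBlocks hn,
    charpoly_sq_fromBlocks_zero, W.charpoly_biadj_mul_transpose (by omega)]
  simp [Polynomial.map_prod, mul_pow, ← pow_mul, prod_pow, mul_comm]
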